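/- arXiv:1708.08550 — 2 statements merged into one kernel-verified Lean document; each statement's English description precedes it below -/
import Mathlib

section
/- If u_k^0 ≤ 0 for all k, then the solution u_k(t) = u_k^0 e^{-a_k t}/(1 - a_k^{2β-1} u_k^0(1 - e^{-a_k t})) exists for all t ≥ 0 and satisfies |u_k(t)| ≤ |u_k^0| e^{-a_k t} for all t ≥ 0. -/
/-- If u_k⁰ ≤ 0, then u_k(t) = u_k⁰ e^{-a_k t}/(1 - a_k^{2β-1} u_k⁰(1 - e^{-a_k t}))
    exists for all t ≥ 0 (denominator nonzero) and |u_k(t)| ≤ |u_k⁰| e^{-a_k t}. -/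
theorem stmt4 (a β u₀ : ℝ) (ha : 0 < a) (hu₀ : u₀ ≤ 0) (u : ℝ → ℝ)
    (hu : ∀ t, u t =
      u₀ * Real.exp (-a * t) / (1 - a ^ (2 * β - 1) * u₀ * (1 - Real.exp (-a * t)))) :
    ∀ t : ℝ, 0 ≤ t →
      1 - a ^ (2 * β - 1) * u₀ * (1 - Real.exp (-a * t)) ≠ 0 ∧
      |u t| ≤ |u₀| * Real.exp (-a * t) := by
  intro t ht
  have hp : (0:ℝ) < a ^ (2 * β - 1) := Real.rpow_pos_of_pos ha _
  have he : Real.exp (-a * t) ≤ 1 := by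
    rw [Real.exp_le_one_iff]
    nlinarith [ha.le]
  have he0 : (0:ℝ) < Real.exp (-a * t) := Real.exp_pos _
  have hden : (1:ℝ) ≤ 1 - a ^ (2 * β - 1) * u₀ * (1 - Real.exp (-a * t)) := by
    have h1 : a ^ (2 * β - 1) * u₀ ≤ 0 := mul_nonpos_of_nonneg_of_nonpos hp.le hu₀
    nlinarith [mul_nonpos_of_nonpos_of_nonneg h1 (by linarith : (0:ℝ) ≤ 1 - Real.exp (-a * t))]
  constructor
  · linarith
  · rw [hu t, abs_div, abs_mul, abs_of_pos he0,
      abs_of_pos (lt_of_lt_of_le one_pos hden)]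
    calc |u₀| * Real.exp (-a * t) / (1 - a ^ (2 * β - 1) * u₀ * (1 - Real.exp (-a * t)))
        ≤ |u₀| * Real.exp (-a * t) / 1 :=
          div_le_div_of_nonneg_left (by positivity) one_pos hden
      _ = |u₀| * Real.exp (-a * t) := by ring
end

section
/- Let 1 > β_1 ≥ … ≥ β_m > 0 with ∑_{k=1}^m β_k > 1, let μ_j = 1/p + (∑_{k=1}^j β_k - 1)/(j-1) for 2 ≤ j ≤ m, and suppose there is a unique l with μ_l = max_j μ_j. Then β_j > μ_l - 1/p for all j ≤ l, and β_j < μ_l - 1/p for all j > l (when such indices exist), where in the first claim it suffices that μ_l > μ_{l-1} (with the convention μ_1 = -1) and in the second that μ_{l+1} < μ_l. -/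
/-!
Write `r_j = (β₁ + ⋯ + β_j - 1)/(j - 1) = μ_j - 1/p`. Then `r_{j+1}` is the weighted average of
`r_j` (weight `j - 1`) and `β_{j+1}` (weight `1`), so it lies strictly between them unless all
three coincide. Hence `r_{l-1} < r_l` forces `r_l < β_l`, and `r_{l+1} < r_l` forces
`β_{l+1} < r_l`; monotonicity of `β` spreads these to all `j ≤ l` and all `j > l`.
For `l = 2` one uses `r_2 = β₁ + β₂ - 1 < β₂` instead.
-/

open Finset

lemma div_lt_add_div_add_one_iff {A b n : ℝ} (hn : 0 < n) :
    A / n < (A + b) / (n + 1) ↔ (A + b) / (n + 1) < b := by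
  rw [div_lt_div_iff₀ hn (by linarith), div_lt_iff₀ (by linarith)]
  constructor <;> intro h <;> linarith

lemma add_div_add_one_lt_div_iff {A b n : ℝ} (hn : 0 < n) :
    (A + b) / (n + 1) < A / n ↔ b < A / n := by
  rw [div_lt_div_iff₀ (by linarith) hn, lt_div_iff₀ hn]
  constructor <;> intro h <;> linarith

/-- `μ_j - 1/p` in the notation of the statement. -/
noncomputable def excessRate (β : ℕ → ℝ) (j : ℕ) : ℝ :=
  ((∑ k ∈ Icc 1 j, β k) - 1) / ((j : ℝ) - 1)

section excessRate

variable (β : ℕ → ℝ) {j : ℕ}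

lemma excessRate_two : excessRate β 2 = β 1 + β 2 - 1 := by
  rw [excessRate, sum_Icc_succ_top (by norm_num), Icc_self, sum_singleton]
  norm_num

lemma excessRate_succ :
    excessRate β (j + 1) =
      ((∑ k ∈ Icc 1 j, β k) - 1 + β (j + 1)) / (((j : ℝ) - 1) + 1) := by
  rw [excessRate, sum_Icc_succ_top (Nat.le_add_left 1 j)]
  push_cast
  ring_nf

lemma excessRate_lt_succ_iff (hj : 2 ≤ j) :
    excessRate β j < excessRate β (j + 1) ↔ excessRate β (j + 1) < β (j + 1) := by
  have hpos : (0 : ℝ) < (j : ℝ) - 1 := sub_pos.2 (Nat.one_lt_cast.2 hj)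
  rw [excessRate_succ]
  exact div_lt_add_div_add_one_iff hpos

lemma excessRate_succ_lt_iff (hj : 2 ≤ j) :
    excessRate β (j + 1) < excessRate β j ↔ β (j + 1) < excessRate β j := by
  have hpos : (0 : ℝ) < (j : ℝ) - 1 := sub_pos.2 (Nat.one_lt_cast.2 hj)
  rw [excessRate_succ]
  exact add_div_add_one_lt_div_iff hpos

end excessRate

theorem stmt8_general (p : ℝ) (m : ℕ) (β : ℕ → ℝ)
    (hmono : ∀ j k, 1 ≤ j → j ≤ k → k ≤ m → β k ≤ β j)
    (hlt : ∀ k, 1 ≤ k → k ≤ m → β k < 1)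
    (μ : ℕ → ℝ)
    (hμ : ∀ j, 2 ≤ j → j ≤ m →
      μ j = 1 / p + ((∑ k ∈ Finset.Icc 1 j, β k) - 1) / ((j : ℝ) - 1))
    (l : ℕ) (hl2 : 2 ≤ l) (hlm : l ≤ m)
    (h1 : μ (l - 1) < μ l) (h2 : l < m → μ (l + 1) < μ l) :
    (∀ j, 1 ≤ j → j ≤ l → μ l - 1 / p < β j) ∧
    (∀ j, l < j → j ≤ m → β j < μ l - 1 / p) := by
  have hμ_lt {i j : ℕ} (hi : 2 ≤ i) (hj : 2 ≤ j) (him : i ≤ m) (hjm : j ≤ m) :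
      μ i < μ j ↔ excessRate β i < excessRate β j := by
    rw [hμ i hi him, hμ j hj hjm, add_lt_add_iff_left]; rfl
  rw [hμ l hl2 hlm, add_sub_cancel_left]
  refine ⟨fun j hj hjl => ?_, fun j hlj hjm => ?_⟩
  · have hβl : excessRate β l < β l := by
      obtain ⟨n, rfl⟩ : ∃ n, l = n + 1 := ⟨l - 1, by omega⟩
      rcases (by omega : n = 1 ∨ 2 ≤ n) with rfl | hn
      · rw [excessRate_two]
        linarith [hlt 1 le_rfl (by omega)]
      · rw [Nat.add_sub_cancel, hμ_lt hn hl2 (by omega) hlm] at h1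
        exact (excessRate_lt_succ_iff β hn).1 h1
    exact hβl.trans_le (hmono j l hj hjl hlm)
  · have hβl : β (l + 1) < excessRate β l :=
      (excessRate_succ_lt_iff β hl2).1
        ((hμ_lt (by omega) hl2 (by omega) hlm).1 (h2 (by omega)))
    exact (hmono (l + 1) j (by omega) hlj hjm).trans_lt hβl

/-- Position of the β_j relative to the critical weight μ_c = μ_l: with the convention
    μ₁ = -1, if μ_l > μ_{l-1} then β_j > μ_l - 1/p for all j ≤ l, and if μ_{l+1} < μ_l
    then β_j < μ_l - 1/p for all l < j ≤ m. -/
theorem stmt8 (p : ℝ) (hp : 1 < p) (m : ℕ) (hm : 2 ≤ m) (β : ℕ → ℝ)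
    (hmono : ∀ j k, 1 ≤ j → j ≤ k → k ≤ m → β k ≤ β j)
    (hpos : ∀ k, 1 ≤ k → k ≤ m → 0 < β k)
    (hlt : ∀ k, 1 ≤ k → k ≤ m → β k < 1)
    (hsum : 1 < ∑ k ∈ Finset.Icc 1 m, β k)
    (μ : ℕ → ℝ) (hμ1 : μ 1 = -1)
    (hμ : ∀ j, 2 ≤ j → j ≤ m →
      μ j = 1 / p + ((∑ k ∈ Finset.Icc 1 j, β k) - 1) / ((j : ℝ) - 1))
    (l : ℕ) (hl2 : 2 ≤ l) (hlm : l ≤ m)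
    (hmax : ∀ j, 2 ≤ j → j ≤ m → μ j ≤ μ l)
    (h1 : μ (l - 1) < μ l) (h2 : l < m → μ (l + 1) < μ l) :
    (∀ j, 1 ≤ j → j ≤ l → μ l - 1 / p < β j) ∧
    (∀ j, l < j → j ≤ m → β j < μ l - 1 / p) :=
  stmt8_general p m β hmono hlt μ hμ l hl2 hlm h1 h2
end
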